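/- Let D1 and D2 be coherent sets of desirable gambles on the nonempty sets X1 and X2 respectively, and let 𝔅_1 ⊆ P_∅(X1), 𝔅_2 ⊆ P_∅(X2). Then D1 ⊗ D2 is the independent natural extension of D1 and D2: it is an independent product of D1 and D2, and D1 ⊗ D2 ⊆ D for every independent product D of D1 and D2. -/

import Mathlib

open scoped BigOperators

namespace IPaper

variable {X : Type*}

/-- A gamble on `X`: a bounded real-valued function. -/
def IsGamble (f : X → ℝ) : Prop := ∃ M : ℝ, ∀ x, |f x| ≤ M

/-- The indicator gamble of an event. -/
noncomputable def ind (B : Set X) : X → ℝ := Set.indicator B 1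

/-- The set `G_{>0}(X)` of nonnegative nonzero gambles. -/
def Gpos (X : Type*) : Set (X → ℝ) := {f | IsGamble f ∧ 0 ≤ f ∧ f ≠ 0}

/-- A coherent set of desirable gambles. -/
structure CoherentSDG (D : Set (X → ℝ)) : Prop where
  subset_gambles : ∀ f ∈ D, IsGamble f
  d1 : ∀ f : X → ℝ, IsGamble f → 0 ≤ f → f ≠ 0 → f ∈ D
  d2 : ∀ f ∈ D, ∀ l : ℝ, 0 < l → l • f ∈ D
  d3 : ∀ f ∈ D, ∀ g ∈ D, f + g ∈ D
  d4 : ∀ f : X → ℝ, f ≤ 0 → f ∉ D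

/-- `posi A`: positive linear hull of `A`. -/
def posi (A : Set (X → ℝ)) : Set (X → ℝ) :=
  {g | ∃ (n : ℕ) (l : Fin (n + 1) → ℝ) (h : Fin (n + 1) → X → ℝ),
    (∀ i, 0 < l i) ∧ (∀ i, h i ∈ A) ∧ g = ∑ i, l i • h i}

/-- `E(A) := posi (A ∪ G_{>0}(X))`. -/
def natExtSet (A : Set (X → ℝ)) : Set (X → ℝ) := posi (A ∪ Gpos X)

/-- `C(X)`: all pairs of a gamble and a nonempty event. -/
def domC (X : Type*) : Set ((X → ℝ) × Set X) := {p | IsGamble p.1 ∧ p.2.Nonempty}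

/-- The conditional lower prevision `lp_D` derived from a set of gambles `D`. -/
noncomputable def lpOf (D : Set (X → ℝ)) (f : X → ℝ) (B : Set X) : EReal :=
  sSup (Real.toEReal '' {m : ℝ | (fun x => (f x - m) * ind B x) ∈ D})

/-- Coherence (Williams) of a conditional lower prevision on a domain `C`. -/
def Coherent (C : Set ((X → ℝ) × Set X)) (lp : (X → ℝ) → Set X → EReal) : Prop :=
  ∃ D : Set (X → ℝ), CoherentSDG D ∧ ∀ p ∈ C, lp p.1 p.2 = lpOf D p.1 p.2

/-- The set `A_lp`. -/
def Alp (C : Set ((X → ℝ) × Set X)) (lp : (X → ℝ) → Set X → EReal) : Set (X → ℝ) :=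
  {g | ∃ p ∈ C, ∃ m : ℝ, (m : EReal) < lp p.1 p.2 ∧ g = fun x => (p.1 x - m) * ind p.2 x}

/-- `E(lp) := E(A_lp)`. -/
def ElpSet (C : Set ((X → ℝ) × Set X)) (lp : (X → ℝ) → Set X → EReal) : Set (X → ℝ) :=
  natExtSet (Alp C lp)

/-- The natural extension of `lp` to all of `C(X)`. -/
noncomputable def natExtLP (C : Set ((X → ℝ) × Set X)) (lp : (X → ℝ) → Set X → EReal)
    (f : X → ℝ) (B : Set X) : EReal :=
  lpOf (ElpSet C lp) f B

/-- Simple `B`-measurable gamble. -/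
def SimpleMeas (Bfam : Set (Set X)) (g : X → ℝ) : Prop :=
  ∃ (c0 : ℝ) (n : ℕ) (c : Fin n → ℝ) (Bs : Fin n → Set X),
    0 ≤ c0 ∧ (∀ i, 0 ≤ c i) ∧ (∀ i, Bs i ∈ Bfam) ∧
    g = fun x => c0 + ∑ i, c i * ind (Bs i) x

/-- `B`-measurable gamble: uniform limit of nonnegative simple `B`-measurable gambles. -/
def BMeas (Bfam : Set (Set X)) (g : X → ℝ) : Prop :=
  ∃ gs : ℕ → X → ℝ, (∀ n, 0 ≤ gs n ∧ SimpleMeas Bfam (gs n)) ∧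
    TendstoUniformly gs g Filter.atTop

/-- A conditional linear prevision on `C(X)`: a coherent self-conjugate conditional
lower prevision on the full domain. -/
def CondLinPrev (P : (X → ℝ) → Set X → EReal) : Prop :=
  Coherent (domC X) P ∧ ∀ p ∈ domC X, P p.1 p.2 = -P (-p.1) p.2

section Product

variable {X1 X2 : Type*}

/-- `A_{1→2}`. -/
def A12 (D2 : Set (X2 → ℝ)) (F1 : Set (Set X1)) : Set (X1 × X2 → ℝ) :=
  {g | ∃ f2 ∈ D2, ∃ B1 ∈ F1 ∪ {Set.univ}, g = fun p => f2 p.2 * ind B1 p.1}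

/-- `A_{2→1}`. -/
def A21 (D1 : Set (X1 → ℝ)) (F2 : Set (Set X2)) : Set (X1 × X2 → ℝ) :=
  {g | ∃ f1 ∈ D1, ∃ B2 ∈ F2 ∪ {Set.univ}, g = fun p => f1 p.1 * ind B2 p.2}

/-- `D1 ⊗ D2`, relative to the families of conditioning events `F1`, `F2`. -/
def indNatExt (D1 : Set (X1 → ℝ)) (D2 : Set (X2 → ℝ))
    (F1 : Set (Set X1)) (F2 : Set (Set X2)) : Set (X1 × X2 → ℝ) :=
  natExtSet (A12 D2 F1 ∪ A21 D1 F2)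

/-- `marg_1(D)`. -/
def marg1 (D : Set (X1 × X2 → ℝ)) : Set (X1 → ℝ) :=
  {f | IsGamble f ∧ (fun p : X1 × X2 => f p.1) ∈ D}

/-- `marg_2(D)`. -/
def marg2 (D : Set (X1 × X2 → ℝ)) : Set (X2 → ℝ) :=
  {f | IsGamble f ∧ (fun p : X1 × X2 => f p.2) ∈ D}

/-- `marg_1(D|B2)`. -/
def marg1c (D : Set (X1 × X2 → ℝ)) (B2 : Set X2) : Set (X1 → ℝ) :=
  {f | IsGamble f ∧ (fun p : X1 × X2 => f p.1 * ind B2 p.2) ∈ D}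

/-- `marg_2(D|B1)`. -/
def marg2c (D : Set (X1 × X2 → ℝ)) (B1 : Set X1) : Set (X2 → ℝ) :=
  {f | IsGamble f ∧ (fun p : X1 × X2 => f p.2 * ind B1 p.1) ∈ D}

/-- Epistemic independence of a set of desirable gambles on `X1 × X2`. -/
def EpIndSDG (F1 : Set (Set X1)) (F2 : Set (Set X2)) (D : Set (X1 × X2 → ℝ)) : Prop :=
  (∀ B2 ∈ F2, marg1c D B2 = marg1 D) ∧ (∀ B1 ∈ F1, marg2c D B1 = marg2 D)

/-- Independent product (of sets of desirable gambles). -/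
def IndProductSDG (F1 : Set (Set X1)) (F2 : Set (Set X2))
    (D1 : Set (X1 → ℝ)) (D2 : Set (X2 → ℝ)) (D : Set (X1 × X2 → ℝ)) : Prop :=
  CoherentSDG D ∧ EpIndSDG F1 F2 D ∧ marg1 D = D1 ∧ marg2 D = D2

/-- The independent natural extension `lp1 ⊗ lp2` on `C(X1 × X2)`. -/
noncomputable def lpProd (C1 : Set ((X1 → ℝ) × Set X1)) (lp1 : (X1 → ℝ) → Set X1 → EReal)
    (C2 : Set ((X2 → ℝ) × Set X2)) (lp2 : (X2 → ℝ) → Set X2 → EReal)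
    (F1 : Set (Set X1)) (F2 : Set (Set X2)) :
    (X1 × X2 → ℝ) → Set (X1 × X2) → EReal :=
  lpOf (indNatExt (ElpSet C1 lp1) (ElpSet C2 lp2) F1 F2)

/-- An independent domain `C ⊆ C(X1 × X2)`. -/
def IndepDomain (F1 : Set (Set X1)) (F2 : Set (Set X2))
    (C : Set ((X1 × X2 → ℝ) × Set (X1 × X2))) : Prop :=
  (∀ (f1 : X1 → ℝ) (B1 : Set X1), IsGamble f1 → B1.Nonempty → ∀ B2 ∈ F2,
    (((fun p : X1 × X2 => f1 p.1), B1 ×ˢ (Set.univ : Set X2)) ∈ C ↔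
      ((fun p : X1 × X2 => f1 p.1), B1 ×ˢ B2) ∈ C)) ∧
  (∀ (f2 : X2 → ℝ) (B2 : Set X2), IsGamble f2 → B2.Nonempty → ∀ B1 ∈ F1,
    (((fun p : X1 × X2 => f2 p.2), (Set.univ : Set X1) ×ˢ B2) ∈ C ↔
      ((fun p : X1 × X2 => f2 p.2), B1 ×ˢ B2) ∈ C))

/-- Epistemic independence of a conditional lower prevision on a domain `C`. -/
def EpIndLP (F1 : Set (Set X1)) (F2 : Set (Set X2))
    (C : Set ((X1 × X2 → ℝ) × Set (X1 × X2)))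
    (lp : (X1 × X2 → ℝ) → Set (X1 × X2) → EReal) : Prop :=
  (∀ (f1 : X1 → ℝ) (B1 : Set X1), IsGamble f1 → B1.Nonempty →
    ((fun p : X1 × X2 => f1 p.1), B1 ×ˢ (Set.univ : Set X2)) ∈ C → ∀ B2 ∈ F2,
    lp (fun p : X1 × X2 => f1 p.1) (B1 ×ˢ (Set.univ : Set X2)) =
      lp (fun p : X1 × X2 => f1 p.1) (B1 ×ˢ B2)) ∧
  (∀ (f2 : X2 → ℝ) (B2 : Set X2), IsGamble f2 → B2.Nonempty →
    ((fun p : X1 × X2 => f2 p.2), (Set.univ : Set X1) ×ˢ B2) ∈ C → ∀ B1 ∈ F1,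
    lp (fun p : X1 × X2 => f2 p.2) ((Set.univ : Set X1) ×ˢ B2) =
      lp (fun p : X1 × X2 => f2 p.2) (B1 ×ˢ B2))

/-- Independent product of two conditional lower previsions, on the joint domain `C`. -/
def IndProductLP (F1 : Set (Set X1)) (F2 : Set (Set X2))
    (C1 : Set ((X1 → ℝ) × Set X1)) (lp1 : (X1 → ℝ) → Set X1 → EReal)
    (C2 : Set ((X2 → ℝ) × Set X2)) (lp2 : (X2 → ℝ) → Set X2 → EReal)
    (C : Set ((X1 × X2 → ℝ) × Set (X1 × X2)))
    (lp : (X1 × X2 → ℝ) → Set (X1 × X2) → EReal) : Prop :=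
  Coherent C lp ∧ EpIndLP F1 F2 C lp ∧
  (∀ p ∈ C1, lp (fun q : X1 × X2 => p.1 q.1) (p.2 ×ˢ (Set.univ : Set X2)) = lp1 p.1 p.2) ∧
  (∀ p ∈ C2, lp (fun q : X1 × X2 => p.1 q.2) ((Set.univ : Set X1) ×ˢ p.2) = lp2 p.1 p.2)

end Product

/-!
The sections `G(·, x2)` of a gamble `G ∈ posi (A_{2→1})` are finitely many gambles, each in `D1`
or zero, and likewise the sections `H(x1, ·)` of `H ∈ posi (A_{1→2})` lie in `D2 ∪ {0}`. The heart
of the proof is that `G + H ≤ 0` forces `G = H = 0`, by Ville's theorem of the alternative for a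
finite matrix indexed by these sections. Every element of `D1 ⊗ D2` is a positive multiple of a
generator plus a gamble above such a `G + H`, which gives coherence. If `f ⊗ 1_B ∈ D1 ⊗ D2` but
`f ∉ D1`, the same fact for the coherent extension of `D1` by `-f` is contradicted by
`(-f) ⊗ 1_B + f ⊗ 1_B = 0`; hence all marginals, conditional or not, are `D1` and `D2`.
Minimality holds because the generators of `D1 ⊗ D2` lie in every independent product.
-/

section

variable {Y Z : Type*}

lemma ind_of_mem {B : Set X} {x : X} (h : x ∈ B) : ind B x = 1 := by
  simp [ind, h]

lemma ind_of_notMem {B : Set X} {x : X} (h : x ∉ B) : ind B x = 0 := by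
  simp [ind, h]

lemma ind_univ : ind (Set.univ : Set X) = 1 := by
  simp [ind]

lemma abs_ind_le_one (B : Set X) (x : X) : |ind B x| ≤ 1 := by
  by_cases h : x ∈ B <;> simp [ind_of_mem, ind_of_notMem, h]

lemma IsGamble.add {f g : X → ℝ} (hf : IsGamble f) (hg : IsGamble g) : IsGamble (f + g) := by
  obtain ⟨M, hM⟩ := hf
  obtain ⟨N, hN⟩ := hg
  exact ⟨M + N, fun x => (abs_add_le _ _).trans (add_le_add (hM x) (hN x))⟩

lemma IsGamble.smul {f : X → ℝ} (hf : IsGamble f) (l : ℝ) : IsGamble (l • f) := by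
  obtain ⟨M, hM⟩ := hf
  refine ⟨|l| * M, fun x => ?_⟩
  rw [Pi.smul_apply, smul_eq_mul, abs_mul]
  exact mul_le_mul_of_nonneg_left (hM x) (abs_nonneg l)

lemma IsGamble.sub {f g : X → ℝ} (hf : IsGamble f) (hg : IsGamble g) : IsGamble (f - g) := by
  simpa [sub_eq_add_neg] using hf.add (hg.smul (-1))

lemma IsGamble.comp_mul_ind {f : X → ℝ} (hf : IsGamble f) (φ : Y → X) (B : Set Z)
    (ψ : Y → Z) : IsGamble (fun y => f (φ y) * ind B (ψ y)) := by
  obtain ⟨M, hM⟩ := hf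
  refine ⟨M, fun y => ?_⟩
  rw [abs_mul]
  exact (mul_le_of_le_one_right (abs_nonneg _) (abs_ind_le_one B (ψ y))).trans (hM (φ y))

variable (X) in
def gambleCone : ConvexCone ℝ (X → ℝ) where
  carrier := {f | IsGamble f}
  smul_mem' l _ _ hf := hf.smul l
  add_mem' _ hf _ hg := hf.add hg

lemma _root_.ConvexCone.sum_mem_of_nonempty {E ι : Type*} [AddCommMonoid E] [Module ℝ E]
    (C : ConvexCone ℝ E) {s : Finset ι} {f : ι → E} (hs : s.Nonempty) (hf : ∀ i ∈ s, f i ∈ C) :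
    ∑ i ∈ s, f i ∈ C := by
  induction hs using Finset.Nonempty.cons_induction with
  | singleton i => simpa using hf i (by simp)
  | cons i s hi _ ih =>
    rw [Finset.sum_cons]
    exact C.add_mem (hf i (by simp)) (ih fun j hj => hf j (by simp [hj]))

lemma _root_.ConvexCone.sum_smul_mem {E ι : Type*} [AddCommMonoid E] [Module ℝ E] [Fintype ι]
    (C : ConvexCone ℝ E) {c : ι → ℝ} {f : ι → E} (hc : 0 ≤ c) (hpos : ∃ i, 0 < c i)
    (hf : ∀ i, f i ∈ C) : ∑ i, c i • f i ∈ C := by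
  classical
  rw [← Finset.sum_filter_of_ne (p := fun i => 0 < c i)]
  · obtain ⟨i, hi⟩ := hpos
    exact C.sum_mem_of_nonempty ⟨i, by simpa using hi⟩ fun j hj =>
      C.smul_mem (by simpa using hj) (hf j)
  · intro i _ hne
    exact (hc i).lt_of_ne fun h => hne (by simp [← h])

namespace CoherentSDG

variable {D : Set (X → ℝ)}

def toConvexCone (hD : CoherentSDG D) : ConvexCone ℝ (X → ℝ) where
  carrier := D
  smul_mem' l hl f hf := hD.d2 f hf l hl
  add_mem' f hf g hg := hD.d3 f hf g hg

lemma zero_notMem (hD : CoherentSDG D) : (0 : X → ℝ) ∉ D := hD.d4 0 le_rfl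

lemma ne_zero_of_mem (hD : CoherentSDG D) {f : X → ℝ} (hf : f ∈ D) : f ≠ 0 :=
  fun h => hD.zero_notMem (h ▸ hf)

lemma mem_of_le (hD : CoherentSDG D) {d f : X → ℝ} (hd : d ∈ D) (hdf : d ≤ f)
    (hf : IsGamble f) : f ∈ D := by
  by_cases h : f - d = 0
  · rwa [sub_eq_zero.mp h]
  · have := hD.d3 d hd (f - d) (hD.d1 _ (hf.sub (hD.subset_gambles d hd))
      (sub_nonneg.mpr hdf) h)
    rwa [add_sub_cancel] at this

lemma add_mem_of_mem_insert (hD : CoherentSDG D) {f g : X → ℝ} (hf : f ∈ D)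
    (hg : g ∈ insert 0 D) : f + g ∈ D := by
  rcases hg with rfl | hg
  · simpa using hf
  · exact hD.d3 f hf g hg

lemma add_mem_insert (hD : CoherentSDG D) {f g : X → ℝ} (hf : f ∈ insert 0 D)
    (hg : g ∈ insert 0 D) : f + g ∈ insert 0 D := by
  rcases hf with rfl | hf
  · simpa using hg
  · exact Or.inr (hD.add_mem_of_mem_insert hf hg)

lemma smul_mem_insert (hD : CoherentSDG D) {f : X → ℝ} (hf : f ∈ insert 0 D) {l : ℝ}
    (hl : 0 ≤ l) : l • f ∈ insert 0 D := by
  rcases hl.eq_or_lt with rfl | hl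
  · simp
  rcases hf with rfl | hf
  · simp
  · exact Or.inr (hD.d2 f hf l hl)

end CoherentSDG

section Posi

variable {A : Set (X → ℝ)}

lemma subset_posi : A ⊆ posi A :=
  fun f hf => ⟨0, fun _ => 1, fun _ => f, fun _ => one_pos, fun _ => hf, by simp⟩

lemma sum_smul_mem_posi {ι : Type*} [Fintype ι] [Nonempty ι] {l : ι → ℝ} {h : ι → X → ℝ}
    (hl : ∀ i, 0 < l i) (hh : ∀ i, h i ∈ A) : ∑ i, l i • h i ∈ posi A := by
  obtain ⟨n, hn⟩ := Nat.exists_eq_succ_of_ne_zero (Fintype.card_ne_zero (α := ι))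
  let e := (Fintype.equivFin ι).trans (finCongr hn)
  exact ⟨n, l ∘ e.symm, h ∘ e.symm, fun _ => hl _, fun _ => hh _,
    (e.symm.sum_comp fun i => l i • h i).symm⟩

lemma add_mem_posi {f g : X → ℝ} (hf : f ∈ posi A) (hg : g ∈ posi A) : f + g ∈ posi A := by
  obtain ⟨n, l, h, hl, hh, rfl⟩ := hf
  obtain ⟨m, l', h', hl', hh', rfl⟩ := hg
  have := sum_smul_mem_posi (A := A) (l := Sum.elim l l') (h := Sum.elim h h')
    (by simp [hl, hl']) (by simp [hh, hh'])
  simpa [Fintype.sum_sum_type] using this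

variable (A) in
def posiCone : ConvexCone ℝ (X → ℝ) where
  carrier := posi A
  smul_mem' c hc f := by
    rintro ⟨n, l, h, hl, hh, rfl⟩
    exact ⟨n, c • l, h, fun i => mul_pos hc (hl i), hh, by simp [Finset.smul_sum, smul_smul]⟩
  add_mem' _ hf _ hg := add_mem_posi hf hg

lemma posi_subset {C : ConvexCone ℝ (X → ℝ)} (hA : A ⊆ C) : posi A ⊆ C := by
  rintro _ ⟨n, l, h, hl, hh, rfl⟩
  exact C.sum_smul_mem (fun i => (hl i).le) ⟨0, hl 0⟩ fun i => hA (hh i)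

lemma exists_eq_smul_add_of_mem_posi {g : X → ℝ} (hg : g ∈ posi A) :
    ∃ a ∈ A, ∃ l : ℝ, 0 < l ∧ ∃ r ∈ insert 0 (posi A), g = l • a + r := by
  obtain ⟨n, l, h, hl, hh, rfl⟩ := hg
  refine ⟨h 0, hh 0, l 0, hl 0, ∑ i : Fin n, l i.succ • h i.succ, ?_, Fin.sum_univ_succ _⟩
  cases n with
  | zero => simp
  | succ n => exact Or.inr ⟨n, _, _, fun i => hl i.succ, fun i => hh i.succ, rfl⟩

end Posi

/-- Ville's theorem of the alternative; the second case comes from separating the compact convex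
set `A(Δ_τ)` from the closed nonpositive orthant. -/
theorem ville_alternative {ρ τ : Type*} [Fintype ρ] [Fintype τ] [Nonempty τ]
    (A : ρ → τ → ℝ) :
    (∃ c ∈ stdSimplex ℝ τ, ∀ s, ∑ t, A s t * c t ≤ 0) ∨
      ∃ d : ρ → ℝ, 0 ≤ d ∧ ∀ t, 0 < ∑ s, d s * A s t := by
  classical
  let Φ := Matrix.mulVecLin (Matrix.of A)
  by_cases hPN : ∃ c ∈ stdSimplex ℝ τ, Φ c ≤ 0
  · obtain ⟨c, hc, hΦc⟩ := hPN
    exact Or.inl ⟨c, hc, fun s => hΦc s⟩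
  right
  have hdisj : Disjoint (Φ '' stdSimplex ℝ τ) (Set.Iic 0) := by
    rw [Set.disjoint_left]
    rintro _ ⟨c, hc, rfl⟩ hΦc
    exact hPN ⟨c, hc, hΦc⟩
  obtain ⟨f, u, v, hfP, huv, hfN⟩ := geometric_hahn_banach_compact_closed
    ((convex_stdSimplex ℝ τ).linear_image Φ)
    ((isCompact_stdSimplex ℝ τ).image Φ.continuous_of_finiteDimensional)
    (convex_Iic 0) isClosed_Iic hdisj
  have hv : v < 0 := by simpa using hfN 0 (Set.mem_Iic.mpr le_rfl)
  have hf_nonneg : ∀ y ≤ 0, 0 ≤ f y := by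
    intro y hy
    by_contra! hfy
    have hr : 0 < (v - 1) / f y := div_pos_of_neg_of_neg (by linarith) hfy
    have := hfN (((v - 1) / f y) • y) (smul_nonpos_of_nonneg_of_nonpos hr.le hy)
    rw [map_smul, smul_eq_mul, div_mul_cancel₀ _ hfy.ne] at this
    linarith
  let e : ρ → ρ → ℝ := fun s j => if s = j then 1 else 0
  refine ⟨fun s => -f (e s), fun s => ?_, fun t => ?_⟩
  · simpa using hf_nonneg (-e s) fun j => by by_cases h : s = j <;> simp [e, h]
  · have hcol : ∑ s, A s t * f (e s) < u := by
      have := hfP _ ⟨_, single_mem_stdSimplex ℝ t, rfl⟩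
      rw [← ContinuousLinearMap.coe_coe, f.toLinearMap.pi_apply_eq_sum_univ] at this
      simpa [Φ] using this
    have hsum : ∑ s, -f (e s) * A s t = -∑ s, A s t * f (e s) := by
      rw [← Finset.sum_neg_distrib]
      exact Finset.sum_congr rfl fun s _ => by ring
    rw [hsum]
    linarith

/-- With `D = D1`, models the sections `x2 ↦ G(·, x2)` of a gamble `G ∈ posi (A_{2→1})`. -/
def FinFamily (D : Set (Y → ℝ)) (X : Type*) : Set (X → Y → ℝ) :=
  {u | (Set.range u).Finite ∧ Set.range u ⊆ insert 0 D}

section Core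

variable {X1 X2 : Type*} {D1 : Set (X1 → ℝ)} {D2 : Set (X2 → ℝ)}

lemma exists_between_of_add_nonpos {u : X2 → X1 → ℝ} {w : X1 → X2 → ℝ}
    (hle : ∀ x1 x2, u x2 x1 + w x1 x2 ≤ 0) {g : X2 → ℝ} {h : X1 → ℝ}
    (hg : g ∈ Set.range w) (hh : h ∈ Set.range u) :
    ∃ m : ℝ, (∀ x1, w x1 = g → h x1 ≤ m) ∧ ∀ x2, u x2 = h → m ≤ -g x2 := by
  obtain ⟨x1, rfl⟩ := hg
  obtain ⟨x2, rfl⟩ := hh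
  have hbound : ∀ x1' x2', w x1' = w x1 → u x2' = u x2 → u x2 x1' ≤ -w x1 x2' := by
    intro x1' x2' h1 h2
    linarith [h1 ▸ h2 ▸ hle x1' x2']
  refine ⟨sSup (u x2 '' {x1' | w x1' = w x1}), fun x1' hx1' => le_csSup ⟨-w x1 x2, ?_⟩
    ⟨x1', hx1', rfl⟩, fun x2' hx2' => csSup_le ⟨_, ⟨x1, rfl, rfl⟩⟩ ?_⟩ <;>
    rintro _ ⟨x1'', hx1'', rfl⟩
  · exact hbound _ _ hx1'' rfl
  · exact hbound _ _ hx1'' hx2'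

/-- With `m` as in `exists_between_of_add_nonpos` for each of the finitely many `g = w x1 ∈ D2`
and `h = u x2 ∈ D1`, either alternative of Ville's theorem for the matrix `m g h` yields a positive
combination of members of `D1` or of `D2` that is nowhere positive. -/
theorem FinFamily.eq_zero_of_add_nonpos (hD1 : CoherentSDG D1) (hD2 : CoherentSDG D2)
    {u : X2 → X1 → ℝ} {w : X1 → X2 → ℝ} (hu : u ∈ FinFamily D1 X2) (hw : w ∈ FinFamily D2 X1)
    (hle : ∀ x1 x2, u x2 x1 + w x1 x2 ≤ 0) : u = 0 := by
  classical
  by_contra hu0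
  obtain ⟨x2₀, hx2₀⟩ : ∃ x2, u x2 ∈ D1 := by
    obtain ⟨x2, hx2⟩ := Function.ne_iff.mp hu0
    exact ⟨x2, (hu.2 ⟨x2, rfl⟩).resolve_left hx2⟩
  let τ := ↥(Set.range u ∩ D1)
  let ρ := ↥(Set.range w ∩ D2)
  have : Fintype τ := (hu.1.inter_of_left D1).fintype
  have : Fintype ρ := (hw.1.inter_of_left D2).fintype
  have : Nonempty τ := ⟨⟨u x2₀, ⟨x2₀, rfl⟩, hx2₀⟩⟩
  choose M le_M M_le using fun (g : ρ) (h : τ) => exists_between_of_add_nonpos hle g.2.1 h.2.1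
  rcases ville_alternative M with ⟨c, hc, hcM⟩ | ⟨d, hd, hdM⟩
  · obtain ⟨h₀, -, hh₀⟩ := Finset.exists_ne_zero_of_sum_ne_zero (hc.2.symm ▸ one_ne_zero)
    refine hD1.d4 (∑ h, c h • h.1) (fun x1 => ?_) (hD1.toConvexCone.sum_smul_mem hc.1
      ⟨h₀, (hc.1 h₀).lt_of_ne' hh₀⟩ fun h => h.2.2)
    simp only [Finset.sum_apply, Pi.smul_apply, smul_eq_mul, Pi.zero_apply]
    rcases hw.2 ⟨x1, rfl⟩ with hw0 | hwD
    · refine Finset.sum_nonpos fun h _ => mul_nonpos_of_nonneg_of_nonpos (hc.1 h) ?_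
      obtain ⟨_, ⟨x2, rfl⟩, -⟩ := h
      simpa [hw0] using hle x1 x2
    · calc ∑ h, c h * h.1 x1 ≤ ∑ h, M ⟨w x1, ⟨x1, rfl⟩, hwD⟩ h * c h :=
            Finset.sum_le_sum fun h _ => by
              rw [mul_comm]; exact mul_le_mul_of_nonneg_right (le_M _ h x1 rfl) (hc.1 h)
        _ ≤ 0 := hcM _
  · obtain ⟨h₀⟩ := ‹Nonempty τ›
    obtain ⟨g₀, -, hg₀⟩ := Finset.exists_ne_zero_of_sum_ne_zero (hdM h₀).ne'
    refine hD2.d4 (∑ g, d g • g.1) (fun x2 => ?_) (hD2.toConvexCone.sum_smul_mem hd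
      ⟨g₀, (hd g₀).lt_of_ne' (left_ne_zero_of_mul hg₀)⟩ fun g => g.2.2)
    simp only [Finset.sum_apply, Pi.smul_apply, smul_eq_mul, Pi.zero_apply]
    rcases hu.2 ⟨x2, rfl⟩ with hu0 | huD
    · refine Finset.sum_nonpos fun g _ => mul_nonpos_of_nonneg_of_nonpos (hd g) ?_
      obtain ⟨_, ⟨x1, rfl⟩, -⟩ := g
      simpa [hu0] using hle x1 x2
    · let h : τ := ⟨u x2, ⟨x2, rfl⟩, huD⟩
      calc ∑ g, d g * g.1 x2 ≤ ∑ g, -(d g * M g h) :=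
            Finset.sum_le_sum fun g _ => by
              rw [← mul_neg]; exact mul_le_mul_of_nonneg_left (by linarith [M_le g h x2 rfl]) (hd g)
        _ ≤ 0 := by rw [Finset.sum_neg_distrib]; linarith [hdM h]

end Core

namespace FinFamily

variable {D D' : Set (Y → ℝ)}

lemma zero_mem : (0 : X → Y → ℝ) ∈ FinFamily D X :=
  ⟨(Set.finite_singleton 0).subset Set.range_const_subset,
    Set.range_const_subset.trans (Set.singleton_subset_iff.mpr (Set.mem_insert _ _))⟩

lemma add_mem (hD : CoherentSDG D) {u v : X → Y → ℝ} (hu : u ∈ FinFamily D X)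
    (hv : v ∈ FinFamily D X) : u + v ∈ FinFamily D X := by
  refine ⟨(hu.1.image2 (· + ·) hv.1).subset ?_, ?_⟩
  · rintro _ ⟨x, rfl⟩
    exact Set.mem_image2_of_mem ⟨x, rfl⟩ ⟨x, rfl⟩
  · rintro _ ⟨x, rfl⟩
    exact hD.add_mem_insert (hu.2 ⟨x, rfl⟩) (hv.2 ⟨x, rfl⟩)

lemma smul_mem (hD : CoherentSDG D) {u : X → Y → ℝ} (hu : u ∈ FinFamily D X) {l : ℝ}
    (hl : 0 ≤ l) : l • u ∈ FinFamily D X := by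
  refine ⟨(hu.1.image (l • ·)).subset ?_, ?_⟩
  · rintro _ ⟨x, rfl⟩
    exact ⟨u x, ⟨x, rfl⟩, rfl⟩
  · rintro _ ⟨x, rfl⟩
    exact hD.smul_mem_insert (hu.2 ⟨x, rfl⟩) hl

lemma mono (h : D ⊆ D') : FinFamily D X ⊆ FinFamily D' X :=
  fun _ hu => ⟨hu.1, hu.2.trans (Set.insert_subset_insert h)⟩

lemma ind_smul_mem {f : Y → ℝ} (hf : f ∈ D) (B : Set X) :
    (fun x => ind B x • f) ∈ FinFamily D X := by
  have hsub : Set.range (fun x => ind B x • f) ⊆ {0, f} := by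
    rintro _ ⟨x, rfl⟩
    by_cases hx : x ∈ B <;> simp [ind_of_mem, ind_of_notMem, hx]
  exact ⟨(Set.toFinite _).subset hsub, hsub.trans (Set.insert_subset_insert (by simpa))⟩

end FinFamily

section CrossCone

variable {X1 X2 : Type*} {D1 : Set (X1 → ℝ)} {D2 : Set (X2 → ℝ)}

def crossCone (hD1 : CoherentSDG D1) (hD2 : CoherentSDG D2) : ConvexCone ℝ (X1 × X2 → ℝ) where
  carrier := {F | ∃ u ∈ FinFamily D1 X2, ∃ w ∈ FinFamily D2 X1,
    ∀ x1 x2, u x2 x1 + w x1 x2 ≤ F (x1, x2)}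
  smul_mem' l hl := by
    rintro F ⟨u, hu, w, hw, hF⟩
    refine ⟨l • u, FinFamily.smul_mem hD1 hu hl.le, l • w, FinFamily.smul_mem hD2 hw hl.le,
      fun x1 x2 => ?_⟩
    simpa [mul_add] using mul_le_mul_of_nonneg_left (hF x1 x2) hl.le
  add_mem' := by
    rintro F ⟨u, hu, w, hw, hF⟩ F' ⟨u', hu', w', hw', hF'⟩
    refine ⟨u + u', FinFamily.add_mem hD1 hu hu', w + w', FinFamily.add_mem hD2 hw hw',
      fun x1 x2 => ?_⟩
    simp only [Pi.add_apply]
    linarith [hF x1 x2, hF' x1 x2]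

variable {hD1 : CoherentSDG D1} {hD2 : CoherentSDG D2}

lemma zero_mem_crossCone : (0 : X1 × X2 → ℝ) ∈ crossCone hD1 hD2 :=
  ⟨0, FinFamily.zero_mem, 0, FinFamily.zero_mem, fun _ _ => by simp⟩

lemma comp_swap_mem_crossCone {F : X1 × X2 → ℝ} (hF : F ∈ crossCone hD1 hD2) :
    F ∘ Prod.swap ∈ crossCone hD2 hD1 := by
  obtain ⟨u, hu, w, hw, hF⟩ := hF
  exact ⟨w, hw, u, hu, fun x2 x1 => by simpa [add_comm] using hF x1 x2⟩

lemma mem_crossCone_of_subset {D1' : Set (X1 → ℝ)} {hD1' : CoherentSDG D1'} (h : D1 ⊆ D1')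
    {F : X1 × X2 → ℝ} (hF : F ∈ crossCone hD1 hD2) : F ∈ crossCone hD1' hD2 := by
  obtain ⟨u, hu, w, hw, hF⟩ := hF
  exact ⟨u, FinFamily.mono h hu, w, hw, hF⟩

lemma eq_zero_of_mem_crossCone_of_nonpos {F : X1 × X2 → ℝ} (hF : F ∈ crossCone hD1 hD2)
    (hF0 : F ≤ 0) : F = 0 := by
  obtain ⟨u, hu, w, hw, huw⟩ := hF
  have hle : ∀ x1 x2, u x2 x1 + w x1 x2 ≤ 0 := fun x1 x2 => (huw x1 x2).trans (hF0 (x1, x2))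
  have hu0 := FinFamily.eq_zero_of_add_nonpos hD1 hD2 hu hw hle
  have hw0 := FinFamily.eq_zero_of_add_nonpos hD2 hD1 hw hu fun x2 x1 => by
    simpa [add_comm] using hle x1 x2
  refine le_antisymm hF0 fun p => ?_
  simpa [hu0, hw0] using huw p.1 p.2

lemma not_cyl_add_nonpos {f : X1 → ℝ} (hf : f ∈ D1) {B : Set X2} (hB : B.Nonempty)
    {F : X1 × X2 → ℝ} (hF : F ∈ crossCone hD1 hD2) :
    ¬ (fun p : X1 × X2 => f p.1 * ind B p.2) + F ≤ 0 := by
  intro hle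
  obtain ⟨u, hu, w, hw, huw⟩ := hF
  have hu' := FinFamily.eq_zero_of_add_nonpos hD1 hD2
    (FinFamily.add_mem hD1 hu (FinFamily.ind_smul_mem hf B)) hw fun x1 x2 => by
      have := hle (x1, x2)
      simp only [Pi.add_apply, Pi.smul_apply, smul_eq_mul, Pi.zero_apply] at this ⊢
      linarith [huw x1 x2, mul_comm (f x1) (ind B x2)]
  obtain ⟨x2, hx2⟩ := hB
  have hmem : f + u x2 ∈ D1 := hD1.add_mem_of_mem_insert hf (hu.2 ⟨x2, rfl⟩)
  refine hD1.ne_zero_of_mem hmem ?_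
  simpa [ind_of_mem hx2, add_comm] using congrFun hu' x2

end CrossCone

section AdjoinNeg

variable {D : Set (X → ℝ)} {f : X → ℝ}

/-- `E(D ∪ {-f})`, written out for a coherent `D`. -/
def adjoinNeg (D : Set (X → ℝ)) (f : X → ℝ) : Set (X → ℝ) :=
  {g | g ≠ 0 ∧ ∃ κ : ℝ, 0 ≤ κ ∧ g + κ • f ∈ insert 0 D}

lemma subset_adjoinNeg (hD : CoherentSDG D) : D ⊆ adjoinNeg D f :=
  fun g hg => ⟨hD.ne_zero_of_mem hg, 0, le_rfl, by simp [hg]⟩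

lemma neg_mem_adjoinNeg (hf0 : f ≠ 0) : -f ∈ adjoinNeg D f :=
  ⟨neg_ne_zero.mpr hf0, 1, zero_le_one, by simp⟩

lemma CoherentSDG.not_le_smul (hD : CoherentSDG D) (hf : IsGamble f) (hf0 : f ≠ 0)
    (hfD : f ∉ D) {κ : ℝ} (hκ : 0 < κ) {e : X → ℝ} (he : e ∈ insert 0 D) : ¬ e ≤ κ • f := by
  intro hle
  have hκf : κ • f ∈ D := by
    rcases he with rfl | he
    · exact hD.d1 _ (hf.smul κ) hle (smul_ne_zero hκ.ne' hf0)
    · exact hD.mem_of_le he hle (hf.smul κ)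
  exact hfD (by simpa [smul_smul, hκ.ne'] using hD.d2 _ hκf κ⁻¹ (inv_pos.mpr hκ))

lemma CoherentSDG.adjoinNeg (hD : CoherentSDG D) (hf : IsGamble f) (hf0 : f ≠ 0)
    (hfD : f ∉ D) : CoherentSDG (adjoinNeg D f) where
  subset_gambles := by
    rintro g ⟨-, κ, -, he⟩
    have hgamble : IsGamble (g + κ • f) := by
      rcases he with he | he
      · exact he ▸ ⟨0, by simp⟩
      · exact hD.subset_gambles _ he
    simpa using hgamble.sub (hf.smul κ)
  d1 g hg hg0 hgne := subset_adjoinNeg hD (hD.d1 g hg hg0 hgne)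
  d2 := by
    rintro g ⟨hg0, κ, hκ, he⟩ l hl
    refine ⟨smul_ne_zero hl.ne' hg0, l * κ, mul_nonneg hl.le hκ, ?_⟩
    simpa [smul_add, smul_smul] using hD.smul_mem_insert he hl.le
  d3 := by
    rintro g ⟨hg0, κ, hκ, he⟩ g' ⟨hg0', κ', hκ', he'⟩
    have hsum : g + g' + (κ + κ') • f = (g + κ • f) + (g' + κ' • f) := by
      rw [add_smul]; abel
    refine ⟨fun hgg' => ?_, κ + κ', add_nonneg hκ hκ', hsum ▸ hD.add_mem_insert he he'⟩
    rcases (add_nonneg hκ hκ').eq_or_lt with hκκ' | hκκ'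
    · obtain ⟨rfl, rfl⟩ : κ = 0 ∧ κ' = 0 := ⟨by linarith, by linarith⟩
      simp only [zero_smul, add_zero] at he he'
      exact hD.zero_notMem (hgg' ▸ hD.add_mem_of_mem_insert (he.resolve_left hg0) he')
    · refine hD.not_le_smul hf hf0 hfD hκκ' (hD.add_mem_insert he he') (le_of_eq ?_)
      rw [← hsum, hgg', zero_add]
  d4 := by
    rintro g hg ⟨hg0, κ, hκ, he⟩
    rcases hκ.eq_or_lt with rfl | hκ
    · simp only [zero_smul, add_zero] at he
      exact hD.d4 g hg (he.resolve_left hg0)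
    · exact hD.not_le_smul hf hf0 hfD hκ he (by simpa using hg)

end AdjoinNeg

section Product

variable {X1 X2 : Type*} {D1 : Set (X1 → ℝ)} {D2 : Set (X2 → ℝ)}
  {F1 : Set (Set X1)} {F2 : Set (Set X2)}

lemma nonempty_of_mem_union_univ [Nonempty X] {F : Set (Set X)} (hF : ∀ A ∈ F, A.Nonempty)
    {B : Set X} (hB : B ∈ F ∪ {Set.univ}) : B.Nonempty := by
  rcases hB with hB | rfl
  · exact hF B hB
  · exact Set.univ_nonempty

lemma indNatExt_subset_crossCone (hD1 : CoherentSDG D1) (hD2 : CoherentSDG D2) :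
    indNatExt D1 D2 F1 F2 ⊆ crossCone hD1 hD2 := by
  refine posi_subset ?_
  rintro _ ((⟨f2, hf2, B1, -, rfl⟩ | ⟨f1, hf1, B2, -, rfl⟩) | ⟨-, hg0, -⟩)
  · exact ⟨0, FinFamily.zero_mem, _, FinFamily.ind_smul_mem hf2 B1,
      fun x1 x2 => by simp [mul_comm]⟩
  · exact ⟨_, FinFamily.ind_smul_mem hf1 B2, 0, FinFamily.zero_mem,
      fun x1 x2 => by simp [mul_comm]⟩
  · exact ⟨0, FinFamily.zero_mem, 0, FinFamily.zero_mem, fun x1 x2 => by simpa using hg0 (x1, x2)⟩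

theorem indNatExt_coherent [Nonempty X1] [Nonempty X2] (hD1 : CoherentSDG D1)
    (hD2 : CoherentSDG D2) (hF1 : ∀ A ∈ F1, A.Nonempty) (hF2 : ∀ A ∈ F2, A.Nonempty) :
    CoherentSDG (indNatExt D1 D2 F1 F2) where
  subset_gambles := posi_subset (C := gambleCone _) <| by
    rintro _ ((⟨f2, hf2, B1, -, rfl⟩ | ⟨f1, hf1, B2, -, rfl⟩) | hg)
    · exact (hD2.subset_gambles f2 hf2).comp_mul_ind Prod.snd B1 Prod.fst
    · exact (hD1.subset_gambles f1 hf1).comp_mul_ind Prod.fst B2 Prod.snd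
    · exact hg.1
  d1 f hf hf0 hfne := subset_posi (Or.inr ⟨hf, hf0, hfne⟩)
  d2 f hf l hl := (posiCone _).smul_mem hl hf
  d3 f hf g hg := add_mem_posi hf hg
  d4 := by
    intro F hF0 hF
    obtain ⟨a, ha, l, hl, r, hr, rfl⟩ := exists_eq_smul_add_of_mem_posi hF
    have hrK : r ∈ crossCone hD1 hD2 := by
      rcases hr with rfl | hr
      · exact zero_mem_crossCone
      · exact indNatExt_subset_crossCone hD1 hD2 hr
    rcases ha with (⟨f2, hf2, B1, hB1, rfl⟩ | ⟨f1, hf1, B2, hB2, rfl⟩) | ⟨-, ha0, hane⟩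
    · refine not_cyl_add_nonpos (hD2.d2 f2 hf2 l hl) (nonempty_of_mem_union_univ hF1 hB1)
        (comp_swap_mem_crossCone hrK) fun q => ?_
      simpa [mul_assoc] using hF0 q.swap
    · refine not_cyl_add_nonpos (hD1.d2 f1 hf1 l hl) (nonempty_of_mem_union_univ hF2 hB2) hrK
        fun p => ?_
      simpa [mul_assoc] using hF0 p
    · obtain rfl := eq_zero_of_mem_crossCone_of_nonpos hrK
        ((le_add_of_nonneg_left (smul_nonneg hl.le ha0)).trans hF0)
      rw [add_zero, ← smul_zero l, smul_le_smul_iff_of_pos_left hl] at hF0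
      exact hane (le_antisymm hF0 ha0)

lemma mem_of_cyl_mem_crossCone (hD1 : CoherentSDG D1) (hD2 : CoherentSDG D2) {f : X1 → ℝ}
    (hf : IsGamble f) (hf0 : f ≠ 0) {B : Set X2} (hB : B.Nonempty)
    (hK : (fun p : X1 × X2 => f p.1 * ind B p.2) ∈ crossCone hD1 hD2) : f ∈ D1 := by
  by_contra hfD
  refine not_cyl_add_nonpos (hD1 := hD1.adjoinNeg hf hf0 hfD) (neg_mem_adjoinNeg hf0) hB
    (mem_crossCone_of_subset (subset_adjoinNeg hD1) hK) fun p => ?_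
  simp

lemma marg1c_indNatExt [Nonempty X1] [Nonempty X2] (hD1 : CoherentSDG D1)
    (hD2 : CoherentSDG D2) (hF1 : ∀ A ∈ F1, A.Nonempty) (hF2 : ∀ A ∈ F2, A.Nonempty)
    {B2 : Set X2} (hB2 : B2 ∈ F2 ∪ {Set.univ}) :
    marg1c (indNatExt D1 D2 F1 F2) B2 = D1 := by
  ext f
  refine ⟨fun ⟨hf, hmem⟩ => ?_, fun hf => ⟨hD1.subset_gambles f hf,
    subset_posi (Or.inl (Or.inr ⟨f, hf, B2, hB2, rfl⟩))⟩⟩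
  have hf0 : f ≠ 0 := by
    rintro rfl
    exact (indNatExt_coherent hD1 hD2 hF1 hF2).d4 _ (fun p => by simp) hmem
  exact mem_of_cyl_mem_crossCone hD1 hD2 hf hf0 (nonempty_of_mem_union_univ hF2 hB2)
    (indNatExt_subset_crossCone hD1 hD2 hmem)

lemma marg2c_indNatExt [Nonempty X1] [Nonempty X2] (hD1 : CoherentSDG D1)
    (hD2 : CoherentSDG D2) (hF1 : ∀ A ∈ F1, A.Nonempty) (hF2 : ∀ A ∈ F2, A.Nonempty)
    {B1 : Set X1} (hB1 : B1 ∈ F1 ∪ {Set.univ}) :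
    marg2c (indNatExt D1 D2 F1 F2) B1 = D2 := by
  ext f
  refine ⟨fun ⟨hf, hmem⟩ => ?_, fun hf => ⟨hD2.subset_gambles f hf,
    subset_posi (Or.inl (Or.inl ⟨f, hf, B1, hB1, rfl⟩))⟩⟩
  have hf0 : f ≠ 0 := by
    rintro rfl
    exact (indNatExt_coherent hD1 hD2 hF1 hF2).d4 _ (fun p => by simp) hmem
  exact mem_of_cyl_mem_crossCone hD2 hD1 hf hf0 (nonempty_of_mem_union_univ hF1 hB1)
    (comp_swap_mem_crossCone (indNatExt_subset_crossCone hD1 hD2 hmem))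

end Product

section Marginals

variable {X1 X2 : Type*} {D : Set (X1 × X2 → ℝ)} {F1 : Set (Set X1)} {F2 : Set (Set X2)}

lemma marg1c_univ (D : Set (X1 × X2 → ℝ)) : marg1c D Set.univ = marg1 D := by
  simp [marg1c, marg1, ind_univ]

lemma marg2c_univ (D : Set (X1 × X2 → ℝ)) : marg2c D Set.univ = marg2 D := by
  simp [marg2c, marg2, ind_univ]

lemma EpIndSDG.marg1c_eq (h : EpIndSDG F1 F2 D) {B2 : Set X2} (hB2 : B2 ∈ F2 ∪ {Set.univ}) :
    marg1c D B2 = marg1 D := by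
  rcases hB2 with hB2 | rfl
  · exact h.1 B2 hB2
  · exact marg1c_univ D

lemma EpIndSDG.marg2c_eq (h : EpIndSDG F1 F2 D) {B1 : Set X1} (hB1 : B1 ∈ F1 ∪ {Set.univ}) :
    marg2c D B1 = marg2 D := by
  rcases hB1 with hB1 | rfl
  · exact h.2 B1 hB1
  · exact marg2c_univ D

end Marginals

end

/-- Theorem 1: `D1 ⊗ D2` is the independent natural extension: the
smallest independent product of `D1` and `D2`. -/
theorem stmt10 {X1 X2 : Type*} [Nonempty X1] [Nonempty X2]
    (D1 : Set (X1 → ℝ)) (D2 : Set (X2 → ℝ))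
    (hD1 : CoherentSDG D1) (hD2 : CoherentSDG D2)
    (F1 : Set (Set X1)) (F2 : Set (Set X2))
    (hF1 : ∀ A ∈ F1, A.Nonempty) (hF2 : ∀ A ∈ F2, A.Nonempty) :
    IndProductSDG F1 F2 D1 D2 (indNatExt D1 D2 F1 F2) ∧
    (∀ D : Set (X1 × X2 → ℝ), IndProductSDG F1 F2 D1 D2 D →
      indNatExt D1 D2 F1 F2 ⊆ D) := by
  have hm1 : marg1 (indNatExt D1 D2 F1 F2) = D1 := by
    rw [← marg1c_univ]; exact marg1c_indNatExt hD1 hD2 hF1 hF2 (Or.inr rfl)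
  have hm2 : marg2 (indNatExt D1 D2 F1 F2) = D2 := by
    rw [← marg2c_univ]; exact marg2c_indNatExt hD1 hD2 hF1 hF2 (Or.inr rfl)
  refine ⟨⟨indNatExt_coherent hD1 hD2 hF1 hF2,
    ⟨fun B2 hB2 => (marg1c_indNatExt hD1 hD2 hF1 hF2 (Or.inl hB2)).trans hm1.symm,
      fun B1 hB1 => (marg2c_indNatExt hD1 hD2 hF1 hF2 (Or.inl hB1)).trans hm2.symm⟩, hm1, hm2⟩, ?_⟩
  rintro D ⟨hD, hind, rfl, rfl⟩
  refine posi_subset (C := hD.toConvexCone) ?_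
  rintro _ ((⟨f2, hf2, B1, hB1, rfl⟩ | ⟨f1, hf1, B2, hB2, rfl⟩) | ⟨hg, hg0, hgne⟩)
  · exact (show f2 ∈ marg2c D B1 by rwa [hind.marg2c_eq hB1]).2
  · exact (show f1 ∈ marg1c D B2 by rwa [hind.marg1c_eq hB2]).2
  · exact hD.d1 _ hg hg0 hgne

end IPaper
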